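/- arXiv:1304.6246 — 2 statements merged into one kernel-verified Lean document; each statement's English description precedes it below -/
import Mathlib

section
/- Let G be a topological group, g ∈ G, and t ∈ G such that for every k ≥ 0 the element t⁻¹ (g u)ᵏ t g⁻ᵏ lies in a fixed compact open subgroup U of G having a base of identity neighbourhoods consisting of subgroups normal in U. Then t·con(g)·t⁻¹ ⊆ con(gu). -/
open Filter Topology

def conSet {G : Type*} [Group G] [TopologicalSpace G] (g : G) : Set G :=
  {u : G | Filter.Tendsto (fun n : ℕ => g ^ n * u * (g ^ n)⁻¹) Filter.atTop (nhds 1)}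

def titsCore (G : Type*) [Group G] [TopologicalSpace G] : Subgroup G :=
  Subgroup.closure (⋃ g : G, _root_.closure (conSet g))

/-
With `c n := t⁻¹ (g u)ⁿ t g⁻ⁿ ∈ U`, the conjugate `(g u)ⁿ (t x t⁻¹) (g u)⁻ⁿ` equals
`t (c n (gⁿ x g⁻ⁿ) (c n)⁻¹) t⁻¹`. For `x ∈ con(g)` the middle factors `gⁿ x g⁻ⁿ` tend to `1`, and
conjugating them by elements of `U` keeps them small because `1` has a base of neighbourhoods
normalised by `U`; conjugation by the fixed `t` is continuous.
-/

lemma conj_conj_eq_conj_conj {G : Type*} [Group G] (a b t x : G) :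
    a * (t * x * t⁻¹) * a⁻¹ =
      t * ((t⁻¹ * a * t * b⁻¹) * (b * x * b⁻¹) * (t⁻¹ * a * t * b⁻¹)⁻¹) * t⁻¹ := by
  group

lemma tendsto_conj_one_of_forall_mem {G ι : Type*} [Group G] [TopologicalSpace G]
    {S : Set G} {l : Filter ι} {c y : ι → G}
    (hbase : ∀ W ∈ 𝓝 (1 : G), ∃ V ∈ 𝓝 (1 : G), V ⊆ W ∧ ∀ s ∈ S, ∀ v ∈ V, s * v * s⁻¹ ∈ V)
    (hc : ∀ i, c i ∈ S) (hy : Tendsto y l (𝓝 1)) :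
    Tendsto (fun i => c i * y i * (c i)⁻¹) l (𝓝 1) := by
  rw [tendsto_def]
  intro W hW
  obtain ⟨V, hV, hVW, hVconj⟩ := hbase W hW
  filter_upwards [tendsto_def.1 hy V hV] with i hi
  exact hVW (hVconj _ (hc i) _ hi)

lemma Filter.Tendsto.conj_one {G ι : Type*} [Group G] [TopologicalSpace G] [ContinuousMul G]
    {l : Filter ι} {y : ι → G} (hy : Tendsto y l (𝓝 1)) (t : G) :
    Tendsto (fun i => t * y i * t⁻¹) l (𝓝 1) := by
  simpa using (hy.const_mul t).mul_const t⁻¹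

theorem stmt11_general {G : Type*} [Group G] [TopologicalSpace G] [IsTopologicalGroup G]
    (g u t : G)
    (U : Subgroup G)
    (hbase : ∀ W ∈ 𝓝 (1 : G), ∃ V : Subgroup G, IsOpen (V : Set G) ∧
      (V : Set G) ⊆ W ∧ V ≤ U ∧ ∀ x ∈ U, ∀ w ∈ V, x * w * x⁻¹ ∈ V)
    (ht : ∀ k : ℕ, t⁻¹ * (g * u) ^ k * t * (g ^ k)⁻¹ ∈ U) :
    (fun x => t * x * t⁻¹) '' conSet g ⊆ conSet (g * u) := by
  rintro _ ⟨x, hx, rfl⟩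
  have hbase' : ∀ W ∈ 𝓝 (1 : G), ∃ V ∈ 𝓝 (1 : G), V ⊆ W ∧
      ∀ s ∈ (U : Set G), ∀ v ∈ V, s * v * s⁻¹ ∈ V := fun W hW => by
    obtain ⟨V, hVo, hVW, -, hVconj⟩ := hbase W hW
    exact ⟨V, hVo.mem_nhds V.one_mem, hVW, hVconj⟩
  have hmid := (tendsto_conj_one_of_forall_mem hbase' ht hx).conj_one t
  exact hmid.congr fun n => (conj_conj_eq_conj_conj _ (g ^ n) t x).symm

theorem stmt11 {G : Type*} [Group G] [TopologicalSpace G] [IsTopologicalGroup G]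
    [T2Space G] [LocallyCompactSpace G] [TotallyDisconnectedSpace G]
    (g u t : G)
    (U : Subgroup G) (hUc : IsCompact (U : Set G)) (hUo : IsOpen (U : Set G))
    (hbase : ∀ W ∈ 𝓝 (1 : G), ∃ V : Subgroup G, IsOpen (V : Set G) ∧
      (V : Set G) ⊆ W ∧ V ≤ U ∧ ∀ x ∈ U, ∀ w ∈ V, x * w * x⁻¹ ∈ V)
    (ht : ∀ k : ℕ, t⁻¹ * (g * u) ^ k * t * (g ^ k)⁻¹ ∈ U) :
    (fun x => t * x * t⁻¹) '' conSet g ⊆ conSet (g * u) :=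
  stmt11_general g u t U hbase ht
end

section
/- Let G be a totally disconnected locally compact group, g ∈ G, and suppose the cyclic subgroup ⟨g⟩ generated by g is relatively compact (i.e. has compact closure). Then con(g) is trivial. -/
/-!
Conjugation by the compact set `K = closure ⟨g⟩` is equicontinuous at `1`: every neighbourhood
`V` of `1` contains `k⁻¹ W k` for all `k ∈ K` and some neighbourhood `W` of `1`. If
`gⁿ u g⁻ⁿ → 1`, then `gⁿ u g⁻ⁿ ∈ W` for some `n`, so `u = g⁻ⁿ (gⁿ u g⁻ⁿ) gⁿ ∈ V`.
Hence `u` lies in every neighbourhood of `1`, and `u = 1` since `G` is Hausdorff.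
-/

open Filter Topology

section ConjCompact

variable {G : Type*} [Group G] [TopologicalSpace G] [IsTopologicalGroup G]

theorem IsCompact.eventually_forall_inv_mul_mul_mem {K V : Set G} (hK : IsCompact K)
    (hV : V ∈ 𝓝 1) : ∀ᶠ x in 𝓝 (1 : G), ∀ k ∈ K, k⁻¹ * x * k ∈ V := by
  refine hK.eventually_forall_of_forall_eventually fun k _ => ?_
  have hconj : Continuous fun p : G × G => p.2⁻¹ * p.1 * p.2 := by fun_prop
  have hV' : V ∈ 𝓝 (k⁻¹ * 1 * k) := by simpa using hV
  exact hconj.continuousAt.preimage_mem_nhds hV'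

theorem specializes_one_of_tendsto_conj {ι : Type*} {l : Filter ι} [l.NeBot] {K : Set G}
    (hK : IsCompact K) {k : ι → G} (hk : ∀ᶠ i in l, k i ∈ K) {u : G}
    (hu : Tendsto (fun i => k i * u * (k i)⁻¹) l (𝓝 1)) : u ⤳ 1 := by
  refine specializes_iff_pure.2 (le_nhds_iff.2 fun V h1V hVo => ?_)
  obtain ⟨i, hki, hconj⟩ :=
    (hk.and (hu.eventually (hK.eventually_forall_inv_mul_mul_mem (hVo.mem_nhds h1V)))).exists
  simpa [mul_assoc] using hconj (k i) hki

end ConjCompact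

theorem stmt17_general {G : Type*} [Group G] [TopologicalSpace G] [IsTopologicalGroup G]
    [T2Space G]
    (g : G) (hg : IsCompact (_root_.closure (Subgroup.zpowers g : Set G))) :
    conSet g = {1} := by
  ext u
  refine ⟨fun hu => ?_, ?_⟩
  · have hpow : ∀ n : ℕ, g ^ n ∈ _root_.closure (Subgroup.zpowers g : Set G) := fun n =>
      subset_closure (pow_mem (Subgroup.mem_zpowers g) n)
    exact (specializes_one_of_tendsto_conj hg (Eventually.of_forall hpow) hu).eq
  · rintro rfl
    simp [conSet]

theorem stmt17 {G : Type*} [Group G] [TopologicalSpace G] [IsTopologicalGroup G]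
    [T2Space G] [LocallyCompactSpace G] [TotallyDisconnectedSpace G]
    (g : G) (hg : IsCompact (_root_.closure (Subgroup.zpowers g : Set G))) :
    conSet g = {1} :=
  stmt17_general g hg
end
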